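/- arXiv:2203.11588 — 3 statements merged into one kernel-verified Lean document; each statement's English description precedes it below -/
import Mathlib

section
/- Let F be a field, let L be a graded abelian group freely generated in each weight n ≥ 2 by symbols [x]_n with x ∈ F \ {0,1}, together with weight-1 part F*, and define δ[x]_n = [x]_{n-1} ∧ [x]_0 for n > 2 and δ[x]_2 = x ∧ (1−x) ∈ ∧²(F*), where [x]_0 denotes x ∈ F* and [x]_1 denotes (1−x)^{−1} ∈ F*. Then the composition δ∘δ (extended as a derivation to ∧²) is zero, i.e. the depth-1 part of the symbolic coalgebra satisfies δ² = 0. -/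
/- STATEMENT 1: the depth-1 part of the symbolic coalgebra satisfies δ² = 0.
The module `PolyMod F` has weight-1 part `F*` (written additively) and is freely
generated in each weight `n ≥ 2` by symbols `[x]ₙ` with `x ∈ F \ {0,1}`.
`[x]₀` denotes `x ∈ F*`.  The cobracket sends a generator `[x]ₙ` to the wedge
`[x]_{n-1} ∧ [x]₀` for `n > 2` and `[x]₂` to `x ∧ (1-x)` (note
`[x]₁ ∧ [x]₀ = (1-x)⁻¹ ∧ x = x ∧ (1-x)`); wedges are encoded as products
`ι a * ι b` in the exterior algebra over ℤ.  The extension of δ to ∧² is the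
derivation `a ∧ b ↦ δa ∧ b - a ∧ δb`, and δ vanishes in weight 1.  The theorem
asserts that this composite vanishes on (the cobracket of) every generator. -/

noncomputable section

variable (F : Type*) [Field F]

/-- weight-1 part `F*` together with free generators `[x]ₙ`, `n ≥ 2`, `x ≠ 0,1`. -/
abbrev PolyMod : Type _ :=
  Additive Fˣ × FreeAbelianGroup {p : ℕ × F // 2 ≤ p.1 ∧ p.2 ≠ 0 ∧ p.2 ≠ 1}

variable {F}

/-- the weight-1 element `[x]₀ = x ∈ F*`. -/
def wone (x : F) (hx : x ≠ 0) : PolyMod F :=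
  (Additive.ofMul (Units.mk0 x hx), 0)

/-- the free generator `[x]ₙ`, `n ≥ 2`. -/
def sym (n : ℕ) (x : F) (h : 2 ≤ n ∧ x ≠ 0 ∧ x ≠ 1) : PolyMod F :=
  (0, FreeAbelianGroup.of ⟨(n, x), h⟩)

/-- the pair `(a, b)` with `δ[x]ₙ = a ∧ b`: for `n = 2` it is `(x, 1-x)`
(i.e. `δ[x]₂ = x ∧ (1-x)`), and for `n > 2` it is `([x]_{n-1}, [x]₀)`. -/
def dPair (n : ℕ) (x : F) (h : 2 ≤ n ∧ x ≠ 0 ∧ x ≠ 1) : PolyMod F × PolyMod F :=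
  if hn : n = 2 then
    (wone x h.2.1, wone (1 - x) (sub_ne_zero.mpr (Ne.symm h.2.2)))
  else
    (sym (n - 1) x ⟨by omega, h.2⟩, wone x h.2.1)

/-- The cobracket `δ : PolyMod F → ∧²`, zero on the weight-1 part and given by
`dPair` on the free generators of weight `≥ 2`. -/
def dFull : PolyMod F →+ ExteriorAlgebra ℤ (PolyMod F) :=
  (FreeAbelianGroup.lift fun p =>
      ExteriorAlgebra.ι ℤ (dPair p.1.1 p.1.2 p.2).1 *
        ExteriorAlgebra.ι ℤ (dPair p.1.1 p.1.2 p.2).2).comp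
    (AddMonoidHom.snd (Additive Fˣ) _)

/-! `δ` vanishes in weight one, so `δ(δ[x]ₙ)` reduces to `δ[x]_{n-1} ∧ [x]₀`. This vanishes because
`δ[x]_{n-1}` already has `[x]₀` as a wedge factor: the `x` of `x ∧ (1-x)` when `n = 3`, the
`[x]₀` of `[x]_{n-2} ∧ [x]₀` when `n > 3`. -/

theorem ExteriorAlgebra.ι_mul_ι_mul_ι_self {R M : Type*} [CommRing R] [AddCommGroup M]
    [Module R M] (a b : M) : ι R a * ι R b * ι R a = 0 := by
  rw [eq_neg_of_add_eq_zero_left (ι_add_mul_swap (R := R) a b), neg_mul, mul_assoc, ι_sq_zero,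
    mul_zero, neg_zero]

theorem dFull_wone (x : F) (hx : x ≠ 0) : dFull (wone x hx) = 0 := by
  simp [dFull, wone]

theorem dFull_sym (n : ℕ) (x : F) (h : 2 ≤ n ∧ x ≠ 0 ∧ x ≠ 1) :
    dFull (sym n x h) =
      ExteriorAlgebra.ι ℤ (dPair n x h).1 * ExteriorAlgebra.ι ℤ (dPair n x h).2 := by
  simp [dFull, sym]

theorem dPair_of_eq_two {n : ℕ} (x : F) (h : 2 ≤ n ∧ x ≠ 0 ∧ x ≠ 1) (hn : n = 2) :
    dPair n x h = (wone x h.2.1, wone (1 - x) (sub_ne_zero.mpr (Ne.symm h.2.2))) :=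
  dif_pos hn

theorem dPair_of_ne_two {n : ℕ} (x : F) (h : 2 ≤ n ∧ x ≠ 0 ∧ x ≠ 1) (hn : n ≠ 2) :
    dPair n x h = (sym (n - 1) x ⟨by omega, h.2⟩, wone x h.2.1) :=
  dif_neg hn

theorem dFull_dPair_snd (n : ℕ) (x : F) (h : 2 ≤ n ∧ x ≠ 0 ∧ x ≠ 1) :
    dFull (dPair n x h).2 = 0 := by
  by_cases hn : n = 2
  · rw [dPair_of_eq_two x h hn, dFull_wone]
  · rw [dPair_of_ne_two x h hn, dFull_wone]

theorem dFull_sym_mul_ι_wone (n : ℕ) (x : F) (h : 2 ≤ n ∧ x ≠ 0 ∧ x ≠ 1) :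
    dFull (sym n x h) * ExteriorAlgebra.ι ℤ (wone x h.2.1) = 0 := by
  rw [dFull_sym]
  by_cases hn : n = 2
  · rw [dPair_of_eq_two x h hn, ExteriorAlgebra.ι_mul_ι_mul_ι_self]
  · rw [dPair_of_ne_two x h hn, mul_assoc, ExteriorAlgebra.ι_sq_zero, mul_zero]

/-- δ² = 0 in depth 1: applying the derivation extension
`a ∧ b ↦ δa ∧ b − a ∧ δb` of δ to `δ[x]ₙ` gives zero, for every generator
`[x]ₙ` with `n ≥ 2`, `x ∈ F \ {0,1}`. -/
theorem depth_one_cobracket_squared_zero (n : ℕ) (x : F)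
    (h : 2 ≤ n ∧ x ≠ 0 ∧ x ≠ 1) :
    dFull (dPair n x h).1 * ExteriorAlgebra.ι ℤ (dPair n x h).2 -
      ExteriorAlgebra.ι ℤ (dPair n x h).1 * dFull (dPair n x h).2 = 0 := by
  rw [dFull_dPair_snd, mul_zero, sub_zero]
  by_cases hn : n = 2
  · rw [dPair_of_eq_two x h hn, dFull_wone, zero_mul]
  · rw [dPair_of_ne_two x h hn]
    exact dFull_sym_mul_ι_wone (n - 1) x _

end
end

section
/- In the free graded Lie-coalgebra-candidate generated by depth-≤2 symbols, the cobracket of [x₁,x₂]_{r,s} (with r, s ≥ 1) equals [x₁,x₂]_{r−1,s} ∧ [x₁]_0 + [x₁,x₂]_{r,s−1} ∧ [x₂]_0 + [x₂]_s ∧ [x₁]_r + Σ_{i=1}^{r} (−1)^{r−i} C(r+s−1−i, s−1) [x₁x₂]_i ∧ [x₂]_{r+s−i} + Σ_{i=1}^{s} (−1)^r C(r+s−1−i, r−1) [x₁x₂]_i ∧ [x₁^{−1}]_{r+s−i}, where symbols with a zero index are interpreted as 0. Formally: extracting the coefficient of t₁^{r−1} t₂^{s−1} from δ[x₁,x₂|t₁,t₂]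 = [x₁,x₂|t₁,t₂]∧(t₁[x₁]₀+t₂[x₂]₀) + [x₂|t₂]∧[x₁|t₁] + [x₁x₂|t₁]∧[x₂|t₂−t₁] − [x₁x₂|t₂]∧[x₁^{−1}|t₂−t₁] yields the displayed formula. -/
/- STATEMENT 2: extracting the coefficient of `t₁^{r-1} t₂^{s-1}` from
`δ[x₁,x₂|t₁,t₂] = [x₁,x₂|t₁,t₂] ∧ (t₁[x₁]₀ + t₂[x₂]₀) + [x₂|t₂] ∧ [x₁|t₁]
  + [x₁x₂|t₁] ∧ [x₂|t₂-t₁] − [x₁x₂|t₂] ∧ [x₁⁻¹|t₂-t₁]`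
yields the displayed formula for `δ[x₁,x₂]_{r,s}`.  Symbols are free generators,
wedges are products `ι a * ι b` in the exterior algebra over ℤ, and the
left-hand side below is the honest coefficient extraction (expanding
`(t₂-t₁)^{m-1}` binomially and collecting the matching exponents). -/

noncomputable section

open Finset

variable (F : Type*) [Field F]

/-- free module on depth-1 symbols `[x]ₙ` (including `[x]₀`) and depth-2 symbols. -/
abbrev Sym2Mod : Type _ := FreeAbelianGroup ((F × ℕ) ⊕ (F × F × ℕ × ℕ))

variable {F}

/-- depth-1 symbol `[x]ₙ`. -/
def one (x : F) (n : ℕ) : Sym2Mod F := FreeAbelianGroup.of (Sum.inl (x, n))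

/-- depth-2 symbol `[x₁,x₂]_{m,n}`, interpreted as `0` when an index is `0`. -/
def two (x y : F) (m n : ℕ) : Sym2Mod F :=
  if m = 0 ∨ n = 0 then 0 else FreeAbelianGroup.of (Sum.inr (x, y, m, n))

/-- wedge `a ∧ b` inside the exterior algebra. -/
def wdg (a b : Sym2Mod F) : ExteriorAlgebra ℤ (Sym2Mod F) :=
  ExteriorAlgebra.ι ℤ a * ExteriorAlgebra.ι ℤ b

/- Each triple sum on the left collapses: for fixed `i` at most one pair `(m, k)` satisfies
its constraint, and it exists exactly for `i ≤ r` (resp. `i ≤ s`). What remains is the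
symmetry of binomial coefficients and `(-1) ^ (r - 1) = -(-1) ^ r`. -/

section Collapse

variable {M : Type*} [AddCommMonoid M]

theorem sum_Icc_sum_range_ite_eq_single {N a b : ℕ} (ha : a ∈ Icc 1 N) (hb : b < a)
    (P : ℕ → ℕ → Prop) [DecidableRel P] (hP : ∀ m ∈ Icc 1 N, ∀ k < m, P m k ↔ m = a ∧ k = b)
    (g : ℕ → ℕ → M) :
    ∑ m ∈ Icc 1 N, ∑ k ∈ range m, (if P m k then g m k else 0) = g a b := by
  rw [sum_eq_single_of_mem a ha, sum_eq_single_of_mem b (mem_range.2 hb),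
    if_pos ((hP a ha b hb).2 ⟨rfl, rfl⟩)]
  · intro k hk hkb
    rw [if_neg fun h => hkb ((hP a ha k (mem_range.1 hk)).1 h).2]
  · intro m hm hma
    exact sum_eq_zero fun k hk => if_neg fun h => hma ((hP m hm k (mem_range.1 hk)).1 h).1

theorem sum_Icc_sum_Icc_sum_range_ite_eq_sum_Icc {N n : ℕ} (hn : n ≤ N)
    (P : ℕ → ℕ → ℕ → Prop) [∀ i, DecidableRel (P i)] (μ κ : ℕ → ℕ)
    (hP : ∀ i ∈ Icc 1 N, ∀ m ∈ Icc 1 N, ∀ k < m, P i m k ↔ i ≤ n ∧ m = μ i ∧ k = κ i)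
    (hμ : ∀ i ∈ Icc 1 n, μ i ∈ Icc 1 N) (hκ : ∀ i ∈ Icc 1 n, κ i < μ i)
    (f : ℕ → ℕ → ℕ → M) :
    ∑ i ∈ Icc 1 N, ∑ m ∈ Icc 1 N, ∑ k ∈ range m, (if P i m k then f i m k else 0)
      = ∑ i ∈ Icc 1 n, f i (μ i) (κ i) := by
  have hsub : Icc 1 n ⊆ Icc 1 N := Icc_subset_Icc_right hn
  rw [← sum_subset hsub]
  · refine sum_congr rfl fun i hi => ?_
    refine sum_Icc_sum_range_ite_eq_single (hμ i hi) (hκ i hi) (P i) (fun m hm k hk => ?_) _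
    rw [hP i (hsub hi) m hm k hk, and_iff_right (mem_Icc.1 hi).2]
  · intro i hi hin
    refine sum_eq_zero fun m hm => sum_eq_zero fun k hk => if_neg fun h => hin ?_
    exact mem_Icc.2 ⟨(mem_Icc.1 hi).1, ((hP i hi m hm k (mem_range.1 hk)).1 h).1⟩

end Collapse

section Coefficients

variable {M : Type*} [AddCommGroup M]

theorem extract_coeff_t₁_wedge_t₂_sub_t₁ {r s : ℕ} (hs : 1 ≤ s) (w : ℕ → ℕ → M) :
    ∑ i ∈ Icc 1 (r + s), ∑ m ∈ Icc 1 (r + s), ∑ k ∈ range m,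
        (if i + k = r ∧ m = s + k then ((-1 : ℤ) ^ k * (m - 1).choose k) • w i m else 0)
      = ∑ i ∈ Icc 1 r, ((-1 : ℤ) ^ (r - i) * (r + s - 1 - i).choose (s - 1)) • w i (r + s - i) := by
  rw [sum_Icc_sum_Icc_sum_range_ite_eq_sum_Icc (Nat.le_add_right r s) _
    (fun i => r + s - i) (fun i => r - i) ?_ ?_ ?_]
  · refine sum_congr rfl fun i hi => ?_
    have hi := (mem_Icc.1 hi).2
    rw [show r + s - i - 1 = (r - i) + (s - 1) by omega, Nat.choose_symm_add,
      show r - i + (s - 1) = r + s - 1 - i by omega]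
  all_goals intros; simp only [mem_Icc] at *; omega

theorem extract_coeff_t₂_wedge_t₂_sub_t₁ {r s : ℕ} (hr : 1 ≤ r) (w : ℕ → ℕ → M) :
    ∑ i ∈ Icc 1 (r + s), ∑ m ∈ Icc 1 (r + s), ∑ k ∈ range m,
        (if k = r - 1 ∧ i + (m - 1 - k) = s then ((-1 : ℤ) ^ k * (m - 1).choose k) • w i m
        else 0)
      = -∑ i ∈ Icc 1 s, ((-1 : ℤ) ^ r * (r + s - 1 - i).choose (r - 1)) • w i (r + s - i) := by
  rw [sum_Icc_sum_Icc_sum_range_ite_eq_sum_Icc (Nat.le_add_left s r) _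
    (fun i => r + s - i) (fun _ => r - 1) ?_ ?_ ?_, ← sum_neg_distrib]
  · refine sum_congr rfl fun i _ => ?_
    rw [← neg_smul, ← mul_pow_sub_one (by omega : r ≠ 0),
      show r + s - i - 1 = r + s - 1 - i by omega]
    congr 1
    ring
  all_goals intros; simp only [mem_Icc] at *; omega

end Coefficients

theorem depth_two_cobracket_coefficient (x₁ x₂ : F) (r s : ℕ)
    (hr : 1 ≤ r) (hs : 1 ≤ s) :
    -- coefficient of t₁^{r-1} t₂^{s-1} in [x₁,x₂|t₁,t₂] ∧ (t₁[x₁]₀ + t₂[x₂]₀):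
    (wdg (two x₁ x₂ (r - 1) s) (one x₁ 0) + wdg (two x₁ x₂ r (s - 1)) (one x₂ 0)
    -- coefficient in [x₂|t₂] ∧ [x₁|t₁]:
    + wdg (one x₂ s) (one x₁ r)
    -- coefficient in [x₁x₂|t₁] ∧ [x₂|t₂−t₁]:
    + ∑ i ∈ Icc 1 (r + s), ∑ m ∈ Icc 1 (r + s), ∑ k ∈ range m,
        (if i + k = r ∧ m = s + k then
          ((-1 : ℤ) ^ k * (m - 1).choose k) • wdg (one (x₁ * x₂) i) (one x₂ m)
        else 0)
    -- coefficient in −[x₁x₂|t₂] ∧ [x₁⁻¹|t₂−t₁]: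
    - ∑ i ∈ Icc 1 (r + s), ∑ m ∈ Icc 1 (r + s), ∑ k ∈ range m,
        (if k = r - 1 ∧ i + (m - 1 - k) = s then
          ((-1 : ℤ) ^ k * (m - 1).choose k) • wdg (one (x₁ * x₂) i) (one x₁⁻¹ m)
        else 0))
    =
    -- the displayed formula:
    wdg (two x₁ x₂ (r - 1) s) (one x₁ 0) + wdg (two x₁ x₂ r (s - 1)) (one x₂ 0)
      + wdg (one x₂ s) (one x₁ r)
      + ∑ i ∈ Icc 1 r, ((-1 : ℤ) ^ (r - i) * (r + s - 1 - i).choose (s - 1)) •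
          wdg (one (x₁ * x₂) i) (one x₂ (r + s - i))
      + ∑ i ∈ Icc 1 s, ((-1 : ℤ) ^ r * (r + s - 1 - i).choose (r - 1)) •
          wdg (one (x₁ * x₂) i) (one x₁⁻¹ (r + s - i)) := by
  rw [extract_coeff_t₁_wedge_t₂_sub_t₁ hs (fun i m => wdg (one (x₁ * x₂) i) (one x₂ m)),
    extract_coeff_t₂_wedge_t₂_sub_t₁ hr (fun i m => wdg (one (x₁ * x₂) i) (one x₁⁻¹ m)),
    sub_neg_eq_add]

end
end

section
/- With δ₁(X) = X ∧ (Σ_{p=1}^{d} t_p [x_p]_0) and δ₄(X) = Σ_{1≤p<q≤d} (−1)^{q−p} [x₁,…,x_{p−1}, x_p⋯x_q, x_{q+1},…,x_d | t₁,…,t_{p−1},t_q,…,t_d] ∧ [x_{q−1}^{−1},…,x_p^{−1} | t_q−t_{q−1},…,t_q−t_p], and using [x^{−1}]_0 = −[x]_0 and [xy]_0 = [x]_0 + [y]_0, one has δ₁δ₄ + δ₄δ₁ = 0, where each δ_i is extended to wedge products as a graded derivation δ_i(a∧b) = δ_i(a)∧b − a∧δ_i(b). -/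
/- STATEMENT 4: δ₁δ₄ + δ₄δ₁ = 0.  Generating-series symbols
`[x_a,…,x_b | t_a,…,t_b]` are free generators indexed by their list of
arguments (units of F) and their list of `t`-parameters; the weight-1 logarithm
part is `F*` written additively, so that `[x⁻¹]₀ = −[x]₀` and
`[xy]₀ = [x]₀ + [y]₀` hold automatically.  Since the identity is a polynomial
identity in the formal variables t₁,…,t_d over ℤ, it is stated for arbitrary
integer values of the tᵢ.  Wedges are products of `ι`'s in the exterior algebra
over ℤ.  `δ₁(X) = X ∧ Σ_p t_p[x_p]₀`, and
`δ₄(X) = Σ_{p<q} (−1)^{q−p} [x₁,…,x_p⋯x_q,…,x_d | t₁,…,t_{p−1},t_q,…,t_d]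
         ∧ [x_{q−1}⁻¹,…,x_p⁻¹ | t_q−t_{q−1},…,t_q−t_p]`,
both extended to wedge products as graded derivations. -/

noncomputable section

open Finset

variable (F : Type*) [Field F]

/-- generating-series symbols (free) together with the weight-1 part `F*`. -/
abbrev SymMod : Type _ := FreeAbelianGroup (List Fˣ × List ℤ) × Additive Fˣ

variable {F}

/-- the free generator `[xs | ts]`. -/
def gen (xs : List Fˣ) (ts : List ℤ) : SymMod F := (FreeAbelianGroup.of (xs, ts), 0)

/-- the weight-1 logarithm symbol `[u]₀`. -/
def lg (u : Fˣ) : SymMod F := (0, Additive.ofMul u)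

/-- `Σ_p t_p [x_p]₀` for the symbol `[xs | ts]`. -/
def logComb (xs : List Fˣ) (ts : List ℤ) : SymMod F :=
  ∑ i ∈ range xs.length, (ts.getD i 0) • lg (xs.getD i 1)

/-- `δ₁` of a single generator: `[xs|ts] ∧ Σ_p t_p [x_p]₀`. -/
def D1 (xs : List Fˣ) (ts : List ℤ) : ExteriorAlgebra ℤ (SymMod F) :=
  ExteriorAlgebra.ι ℤ (gen xs ts) * ExteriorAlgebra.ι ℤ (logComb xs ts)

/-
For a pair `p < q`, the two factors `X'`, `X''` of the `δ₄`-term have weight-one parts `L'`, `L''`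
adding up to the weight-one part `L = Σ_r t_r [x_r]₀` of `X`: the contracted symbol contributes
`t_q ([x_p]₀ + ⋯ + [x_q]₀)` and the inverted one `Σ_{p ≤ r < q} (t_q - t_r)(-[x_r]₀)`. Hence the
pair contributes `X' ∧ L' ∧ X'' - X' ∧ X'' ∧ L'' + X' ∧ X'' ∧ (L' + L'') = X' ∧ (L' ∧ X'' + X'' ∧ L')`,
which vanishes because elements of degree one anticommute.
-/

theorem ExteriorAlgebra.ι_mul_ι_mul_ι_sub_add_eq_zero_of_add_eq {R M : Type*} [CommRing R]
    [AddCommGroup M] [Module R M] {a b x y z : M} (h : x + y = z) :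
    ι R a * ι R x * ι R b - ι R a * (ι R b * ι R y) + ι R a * ι R b * ι R z = 0 := by
  rw [← h, map_add]
  calc _ = ι R a * (ι R x * ι R b + ι R b * ι R x) := by noncomm_ring
    _ = 0 := by rw [ι_add_mul_swap, mul_zero]

theorem List.sum_map_range' {M : Type*} [AddCommMonoid M] (f : ℕ → M) (a n : ℕ) :
    ((List.range' a n).map f).sum = ∑ i ∈ Finset.Ico a (a + n), f i := by
  rw [Nat.Ico_eq_range', add_tsub_cancel_left]
  rfl

theorem lg_inv (v : Fˣ) : lg v⁻¹ = -lg (F := F) v := by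
  simp [lg]

theorem lg_prod {ι : Type*} (s : Finset ι) (f : ι → Fˣ) :
    lg (∏ i ∈ s, f i) = ∑ i ∈ s, lg (F := F) (f i) := by
  refine Prod.ext ?_ ?_ <;> simp [lg, Prod.fst_sum, Prod.snd_sum, ofMul_prod]

theorem logComb_nil (ts : List ℤ) : logComb (F := F) [] ts = 0 := by
  simp [logComb]

theorem logComb_cons (x : Fˣ) (xs : List Fˣ) (s : ℤ) (ts : List ℤ) :
    logComb (x :: xs) (s :: ts) = s • lg x + logComb xs ts := by
  rw [logComb, List.length_cons, sum_range_succ', add_comm]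
  simp [logComb]

theorem logComb_append (xs ys : List Fˣ) (ts ss : List ℤ) (h : xs.length = ts.length) :
    logComb (xs ++ ys) (ts ++ ss) = logComb xs ts + logComb ys ss := by
  induction xs generalizing ts with
  | nil => simp [List.eq_nil_of_length_eq_zero h.symm, logComb_nil]
  | cons x xs ih =>
    obtain _ | ⟨s, ts⟩ := ts
    · simp at h
    · simp only [List.cons_append, logComb_cons, ih ts (by simpa using h), add_assoc]

theorem logComb_map (l : List ℕ) (f : ℕ → Fˣ) (g : ℕ → ℤ) :
    logComb (l.map f) (l.map g) = (l.map fun r => g r • lg (F := F) (f r)).sum := by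
  induction l with
  | nil => simp [logComb_nil]
  | cons a l ih => simp [logComb_cons, ih]

-- The arguments and parameters of the two factors of the `δ₄`-term attached to `p < q`.
def contractedArgs (u : ℕ → Fˣ) (d p q : ℕ) : List Fˣ :=
  ((List.range' 1 (p - 1)).map u) ++ (∏ r ∈ Icc p q, u r) :: ((List.range' (q + 1) (d - q)).map u)

def contractedParams (t : ℕ → ℤ) (d p q : ℕ) : List ℤ :=
  ((List.range' 1 (p - 1)).map t) ++ ((List.range' q (d - q + 1)).map t)

def invertedArgs (u : ℕ → Fˣ) (p q : ℕ) : List Fˣ :=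
  ((List.range' p (q - p)).map fun r => (u r)⁻¹).reverse

def invertedParams (t : ℕ → ℤ) (p q : ℕ) : List ℤ :=
  ((List.range' p (q - p)).map fun r => t q - t r).reverse

theorem logComb_range' (u : ℕ → Fˣ) (t : ℕ → ℤ) (d : ℕ) :
    logComb ((List.range' 1 d).map u) ((List.range' 1 d).map t) =
      ∑ r ∈ Ico 1 (d + 1), t r • lg (u r) := by
  rw [logComb_map, List.sum_map_range', add_comm]

theorem logComb_contracted (u : ℕ → Fˣ) (t : ℕ → ℤ) {d p q : ℕ} (hp : 1 ≤ p) (hqd : q ≤ d) :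
    logComb (contractedArgs u d p q) (contractedParams t d p q) =
      ∑ r ∈ Ico 1 p, t r • lg (u r) + (t q • ∑ r ∈ Icc p q, lg (u r) +
        ∑ r ∈ Ico (q + 1) (d + 1), t r • lg (u r)) := by
  rw [contractedArgs, contractedParams, List.range'_succ, List.map_cons,
    logComb_append _ _ _ _ (by simp), logComb_cons, logComb_map, logComb_map,
    List.sum_map_range', List.sum_map_range', Nat.add_sub_cancel' hp,
    show q + 1 + (d - q) = d + 1 by omega, lg_prod]

theorem logComb_inverted (u : ℕ → Fˣ) (t : ℕ → ℤ) {p q : ℕ} (hpq : p ≤ q) :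
    logComb (invertedArgs u p q) (invertedParams t p q) =
      ∑ r ∈ Ico p q, (t r - t q) • lg (u r) := by
  rw [invertedArgs, invertedParams, ← List.map_reverse, ← List.map_reverse, logComb_map,
    List.map_reverse, List.sum_reverse, List.sum_map_range', Nat.add_sub_cancel' hpq]
  refine sum_congr rfl fun r _ => ?_
  rw [lg_inv, zsmul_neg, ← neg_zsmul, neg_sub]

theorem logComb_contracted_add_logComb_inverted (u : ℕ → Fˣ) (t : ℕ → ℤ) {d p q : ℕ}
    (hp : 1 ≤ p) (hpq : p < q) (hqd : q ≤ d) :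
    logComb (contractedArgs u d p q) (contractedParams t d p q) +
        logComb (invertedArgs u p q) (invertedParams t p q) =
      logComb ((List.range' 1 d).map u) ((List.range' 1 d).map t) := by
  have scale : t q • ∑ r ∈ Ico p q, lg (u r) = ∑ r ∈ Ico p q, t q • lg (F := F) (u r) :=
    map_sum (zsmulAddGroupHom (t q)) _ _
  have middle : t q • ∑ r ∈ Icc p q, lg (u r) + ∑ r ∈ Ico p q, (t r - t q) • lg (u r) =
      ∑ r ∈ Ico p (q + 1), t r • lg (F := F) (u r) := by
    rw [← Ico_add_one_right_eq_Icc, sum_Ico_succ_top hpq.le, sum_Ico_succ_top hpq.le, zsmul_add,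
      add_right_comm, scale, ← sum_add_distrib]
    congr 1
    exact sum_congr rfl fun r _ => by rw [← add_zsmul, add_sub_cancel]
  rw [logComb_contracted u t hp hqd, logComb_inverted u t hpq.le, logComb_range',
    add_assoc, add_right_comm _ (∑ r ∈ Ico (q + 1) (d + 1), _), middle, ← add_assoc,
    sum_Ico_consecutive _ hp (by omega), sum_Ico_consecutive _ (by omega) (by omega)]

theorem delta_one_delta_four_anticommute (u : ℕ → Fˣ) (t : ℕ → ℤ) (d : ℕ) :
    -- data of the δ₄-term attached to a pair p < q:
    (let mX : ℕ → ℕ → List Fˣ := fun p q =>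
      ((List.range' 1 (p - 1)).map u) ++ (∏ r ∈ Icc p q, u r) ::
        ((List.range' (q + 1) (d - q)).map u)
    let mT : ℕ → ℕ → List ℤ := fun p q =>
      ((List.range' 1 (p - 1)).map t) ++ ((List.range' q (d - q + 1)).map t)
    let iX : ℕ → ℕ → List Fˣ := fun p q =>
      (((List.range' p (q - p)).map fun r => (u r)⁻¹).reverse)
    let iT : ℕ → ℕ → List ℤ := fun p q =>
      (((List.range' p (q - p)).map fun r => t q - t r).reverse)
    let PQ : Finset (ℕ × ℕ) := (Icc 1 d ×ˢ Icc 1 d).filter fun z => z.1 < z.2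
    -- δ₁δ₄(X):
    (∑ z ∈ PQ, ((-1 : ℤ) ^ (z.2 - z.1)) •
        (D1 (mX z.1 z.2) (mT z.1 z.2) *
            ExteriorAlgebra.ι ℤ (gen (iX z.1 z.2) (iT z.1 z.2))
          - ExteriorAlgebra.ι ℤ (gen (mX z.1 z.2) (mT z.1 z.2)) *
            D1 (iX z.1 z.2) (iT z.1 z.2)))
    -- + δ₄δ₁(X):
    + (∑ z ∈ PQ, ((-1 : ℤ) ^ (z.2 - z.1)) •
        (ExteriorAlgebra.ι ℤ (gen (mX z.1 z.2) (mT z.1 z.2)) *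
          ExteriorAlgebra.ι ℤ (gen (iX z.1 z.2) (iT z.1 z.2)))) *
      ExteriorAlgebra.ι ℤ (logComb ((List.range' 1 d).map u) ((List.range' 1 d).map t))
    ) = 0 := by
  dsimp only
  rw [sum_mul, ← sum_add_distrib]
  refine sum_eq_zero fun ⟨p, q⟩ hz => ?_
  obtain ⟨⟨⟨hp, -⟩, -, hqd⟩, hpq⟩ := by simpa only [mem_filter, mem_product, mem_Icc] using hz
  rw [smul_mul_assoc, ← smul_add, D1, D1]
  exact smul_eq_zero_of_right _ <| ExteriorAlgebra.ι_mul_ι_mul_ι_sub_add_eq_zero_of_add_eq <|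
    logComb_contracted_add_logComb_inverted u t hp hpq hqd

end
end
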